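/- Let (m_k)_{k≥1} be a strictly increasing sequence of positive integers, m_0 = 0, and let x^k ∈ R((I − P_{m_{k−1}}) Q_{m_k}) for each k. Then 2‖Σ_{i=1}^k x^i‖_J² ≥ Σ_{i=1}^k ‖x^i‖_J² for every k. -/

import Mathlib

open Filter Topology

/-- Composition `φ_n^m = φ_{m-1} ∘ ⋯ ∘ φ_n : X n →L X m` (junk value for `m < n`). -/
noncomputable def phiTo {X : ℕ → Type*} [∀ n, NormedAddCommGroup (X n)]
    [∀ n, NormedSpace ℝ (X n)] (φ : ∀ n, X n →L[ℝ] X (n + 1)) (n : ℕ) :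
    (m : ℕ) → X n →L[ℝ] X m
  | 0 => 0
  | m + 1 =>
    if h : m + 1 = n then by rw [h]; exact ContinuousLinearMap.id ℝ (X n)
    else (φ m).comp (phiTo φ n m)

open Classical in
/-- `σ(x,S)²`: the sum over consecutive pairs `p < q` of `S` of `‖φ_p^q(x_p) - x_q‖²`. -/
noncomputable def sigma2 {X : ℕ → Type*} [∀ n, NormedAddCommGroup (X n)]
    [∀ n, NormedSpace ℝ (X n)] (φ : ∀ n, X n →L[ℝ] X (n + 1))
    (x : ∀ n, X n) (S : Finset ℕ) : ℝ :=
  ∑ p ∈ S, ∑ q ∈ S,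
    if p < q ∧ ∀ r ∈ S, ¬(p < r ∧ r < q) then ‖phiTo φ p q (x p) - x q‖ ^ 2 else 0

noncomputable def sigmaJ {X : ℕ → Type*} [∀ n, NormedAddCommGroup (X n)]
    [∀ n, NormedSpace ℝ (X n)] (φ : ∀ n, X n →L[ℝ] X (n + 1))
    (x : ∀ n, X n) (S : Finset ℕ) : ℝ :=
  Real.sqrt (sigma2 φ x S)

/-- `ρ(x,S)² = σ(x,S)² + ‖x_{max S}‖²`. -/
noncomputable def rho2 {X : ℕ → Type*} [∀ n, NormedAddCommGroup (X n)]
    [∀ n, NormedSpace ℝ (X n)] (φ : ∀ n, X n →L[ℝ] X (n + 1))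
    (x : ∀ n, X n) (S : Finset ℕ) (hS : S.Nonempty) : ℝ :=
  sigma2 φ x S + ‖x (S.max' hS)‖ ^ 2

noncomputable def rhoJ {X : ℕ → Type*} [∀ n, NormedAddCommGroup (X n)]
    [∀ n, NormedSpace ℝ (X n)] (φ : ∀ n, X n →L[ℝ] X (n + 1))
    (x : ∀ n, X n) (S : Finset ℕ) (hS : S.Nonempty) : ℝ :=
  Real.sqrt (rho2 φ x S hS)

/-- The set of values `ρ(x,S)` over finite nonempty `S ⊆ ℕ`. -/
def rhoSet {X : ℕ → Type*} [∀ n, NormedAddCommGroup (X n)]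
    [∀ n, NormedSpace ℝ (X n)] (φ : ∀ n, X n →L[ℝ] X (n + 1))
    (x : ∀ n, X n) : Set ℝ :=
  {r : ℝ | ∃ (S : Finset ℕ) (hS : S.Nonempty), r = rhoJ φ x S hS}

/-- Membership in `Ĵ(Φ)`: `sup_S ρ(x,S) < ∞`. -/
def memJhat {X : ℕ → Type*} [∀ n, NormedAddCommGroup (X n)]
    [∀ n, NormedSpace ℝ (X n)] (φ : ∀ n, X n →L[ℝ] X (n + 1))
    (x : ∀ n, X n) : Prop :=
  BddAbove (rhoSet φ x)

/-- The norm `‖x‖_J = (1/√2) sup_S ρ(x,S)`. -/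
noncomputable def normJ {X : ℕ → Type*} [∀ n, NormedAddCommGroup (X n)]
    [∀ n, NormedSpace ℝ (X n)] (φ : ∀ n, X n →L[ℝ] X (n + 1))
    (x : ∀ n, X n) : ℝ :=
  (Real.sqrt 2)⁻¹ * sSup (rhoSet φ x)

/-- Membership in `J(Φ)`: member of `Ĵ(Φ)` with `‖x_n‖ → 0`. -/
def memJ {X : ℕ → Type*} [∀ n, NormedAddCommGroup (X n)]
    [∀ n, NormedSpace ℝ (X n)] (φ : ∀ n, X n →L[ℝ] X (n + 1))
    (x : ∀ n, X n) : Prop :=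
  memJhat φ x ∧ Tendsto (fun n => ‖x n‖) atTop (𝓝 0)

open Classical in
/-- The coordinate restriction `P_I`. -/
noncomputable def restrictSeq {X : ℕ → Type*} [∀ n, NormedAddCommGroup (X n)]
    (I : Set ℕ) (x : ∀ n, X n) : ∀ n, X n :=
  fun n => if n ∈ I then x n else 0

/-- The stepping map `Q_α`. -/
noncomputable def stepSeq {X : ℕ → Type*} [∀ n, NormedAddCommGroup (X n)]
    [∀ n, NormedSpace ℝ (X n)] (φ : ∀ n, X n →L[ℝ] X (n + 1))
    (α : ℕ → ℕ) (x : ∀ n, X n) : ∀ n, X n :=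
  fun n => phiTo φ (α n) n (x (α n))


/-!
Each `x^i` vanishes up to `m_{i-1}` and follows the maps `φ` from `m_i` on. Clamping the indices
of a finite set `T` into `[m_{i-1}, m_i]` does not decrease `σ(x^i, ·)`, because the `φ` are
contractions, and `‖x^i_{max T}‖²` is at most `σ(x^i, ·)²` of a two-point subset of that interval.
Hence `ρ(x^i, T)² ≤ 2 V_i`, where `V_i` is the largest `σ(x^i, t)²` over `t ⊆ [m_{i-1}, m_i]`,
so `‖x^i‖_J² ≤ V_i`. Conversely, maximizers `t_i` can be taken to contain both endpoints, and
glued together they give a set on which `σ(z, ·)²` for `z = Σ x^i` is `Σ V_i`: on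
`[m_{i-1}, m_i]` the other blocks are zero or follow `φ`, so they add no jumps. Thus
`Σ V_i ≤ 2 ‖z‖_J²`.
-/

open Finset

section Transition

variable {X : ℕ → Type*} [∀ n, NormedAddCommGroup (X n)] [∀ n, NormedSpace ℝ (X n)]
  [Subsingleton (X 0)] (φ : ∀ n, X n →L[ℝ] X (n + 1))

theorem phiTo_self_apply (n : ℕ) (v : X n) : phiTo φ n n v = v := by
  cases n with
  | zero => exact Subsingleton.elim _ _
  | succ n => rw [phiTo, dif_pos rfl]; rfl

omit [Subsingleton (X 0)] in
theorem phiTo_succ_apply {n q : ℕ} (h : q + 1 ≠ n) (v : X n) :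
    phiTo φ n (q + 1) v = φ q (phiTo φ n q v) := by
  rw [phiTo, dif_neg h]; rfl

theorem phiTo_phiTo_apply {p q r : ℕ} (hpq : p ≤ q) (hqr : q ≤ r) (v : X p) :
    phiTo φ q r (phiTo φ p q v) = phiTo φ p r v := by
  induction r, hqr using Nat.le_induction with
  | base => exact phiTo_self_apply φ q _
  | succ r hqr ih =>
    rw [phiTo_succ_apply φ (by omega), phiTo_succ_apply φ (by omega), ih]

theorem norm_phiTo_apply_le (hφ : ∀ n, ‖φ n‖ ≤ 1) {p : ℕ} (v : X p) (q : ℕ) :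
    ‖phiTo φ p q v‖ ≤ ‖v‖ := by
  induction q with
  | zero => simp [phiTo]
  | succ q ih =>
    by_cases h : q + 1 = p
    · subst h; rw [phiTo_self_apply]
    · rw [phiTo_succ_apply φ h]
      exact ((φ q).le_of_opNorm_le (hφ q) _).trans (by rw [one_mul]; exact ih)

end Transition

section Variation

variable {X : ℕ → Type*} [∀ n, NormedAddCommGroup (X n)] [∀ n, NormedSpace ℝ (X n)]
  (φ : ∀ n, X n →L[ℝ] X (n + 1)) (x : ∀ n, X n)

theorem sigma2_nonneg (S : Finset ℕ) : 0 ≤ sigma2 φ x S :=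
  sum_nonneg fun _ _ => sum_nonneg fun _ _ => by split_ifs <;> positivity

@[simp]
theorem sigma2_empty : sigma2 φ x ∅ = 0 := by simp [sigma2]

@[simp]
theorem sigma2_singleton (n : ℕ) : sigma2 φ x {n} = 0 := by simp [sigma2]

theorem sigma2_congr {y : ∀ n, X n} {S : Finset ℕ}
    (h : ∀ p ∈ S, ∀ q ∈ S, p < q → phiTo φ p q (x p) - x q = phiTo φ p q (y p) - y q) :
    sigma2 φ x S = sigma2 φ y S :=
  sum_congr rfl fun p hp => sum_congr rfl fun q hq => by
    split_ifs with hpq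
    · rw [h p hp q hq hpq.1]
    · rfl

theorem sigma2_insert_of_forall_le {S : Finset ℕ} {p q : ℕ} (hp : p ∈ S)
    (hpS : ∀ r ∈ S, r ≤ p) (hpq : p < q) :
    sigma2 φ x (insert q S) = sigma2 φ x S + ‖phiTo φ p q (x p) - x q‖ ^ 2 := by
  have hq : ∀ r ∈ S, r < q := fun r hr => (hpS r hr).trans_lt hpq
  have hqS : q ∉ S := fun h => lt_irrefl q (hq q h)
  have hlast : ∀ s ∈ S, (s < q ∧ ∀ r ∈ insert q S, ¬(s < r ∧ r < q)) ↔ s = p := by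
    intro s hs
    simp only [mem_insert, forall_eq_or_imp, lt_irrefl, and_false, not_false_eq_true, true_and]
    refine ⟨fun ⟨_, hmax⟩ => le_antisymm (hpS s hs) (not_lt.mp fun h => hmax p hp ⟨h, hpq⟩), ?_⟩
    rintro rfl
    exact ⟨hpq, fun r hr h => (hpS r hr).not_gt h.1⟩
  have hinner : ∀ s r, r ∈ S → ((s < r ∧ ∀ u ∈ insert q S, ¬(s < u ∧ u < r)) ↔
      (s < r ∧ ∀ u ∈ S, ¬(s < u ∧ u < r))) := by
    intro s r hr
    have hrq := hq r hr
    simp only [mem_insert, forall_eq_or_imp]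
    exact ⟨fun ⟨h1, _, h3⟩ => ⟨h1, h3⟩, fun ⟨h1, h3⟩ => ⟨h1, fun h => by omega, h3⟩⟩
  unfold sigma2
  rw [sum_insert hqS, sum_insert hqS, if_neg (fun h => lt_irrefl q h.1), zero_add,
    sum_eq_zero (fun r hr => if_neg fun h => (hq r hr).not_gt h.1), zero_add]
  simp_rw [sum_insert hqS]
  rw [sum_add_distrib, add_comm]
  congr 1
  · exact sum_congr rfl fun s _ => sum_congr rfl fun r hr => if_congr (hinner s r hr) rfl rfl
  · rw [sum_congr rfl fun s hs => if_congr (hlast s hs) rfl rfl]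
    simp [hp]

theorem sigma2_pair {p q : ℕ} (hpq : p < q) :
    sigma2 φ x {p, q} = ‖phiTo φ p q (x p) - x q‖ ^ 2 := by
  rw [pair_comm, sigma2_insert_of_forall_le φ x (mem_singleton_self p)
    (fun r hr => (mem_singleton.mp hr).le) hpq, sigma2_singleton, zero_add]

theorem sigma2_union {A B : Finset ℕ} {c : ℕ} (hA : ∀ a ∈ A, a ≤ c) (hB : ∀ b ∈ B, c ≤ b)
    (hcA : c ∈ A) (hcB : c ∈ B) : sigma2 φ x (A ∪ B) = sigma2 φ x A + sigma2 φ x B := by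
  induction B using Finset.induction_on_max with
  | empty => simp at hcB
  | insert q B hlt ih =>
    rcases B.eq_empty_or_nonempty with rfl | hB'
    · obtain rfl : c = q := by simpa using hcB
      simp [insert_eq_of_mem hcA]
    have hcB' : c ∈ B := by
      obtain ⟨b, hb⟩ := hB'
      rcases mem_insert.mp hcB with rfl | h
      · exact absurd (hB b (mem_insert_of_mem hb)) (hlt b hb).not_ge
      · exact h
    have hmax : ∀ r ∈ A ∪ B, r ≤ B.max' hB' := fun r hr => (mem_union.mp hr).elim
      (fun ha => (hA r ha).trans (B.le_max' c hcB')) (B.le_max' r)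
    have hmaxq := hlt _ (B.max'_mem hB')
    rw [union_insert,
      sigma2_insert_of_forall_le φ x (mem_union_right A (B.max'_mem hB')) hmax hmaxq,
      sigma2_insert_of_forall_le φ x (B.max'_mem hB') (B.le_max') hmaxq,
      ih (fun b hb => hB b (mem_insert_of_mem hb)) hcB', add_assoc]

theorem sigma2_le_sigma2_insert_of_forall_le {S : Finset ℕ} {q : ℕ} (hq : ∀ r ∈ S, r ≤ q) :
    sigma2 φ x S ≤ sigma2 φ x (insert q S) := by
  by_cases hqS : q ∈ S
  · rw [insert_eq_of_mem hqS]
  rcases S.eq_empty_or_nonempty with rfl | hS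
  · simp
  have hmax : S.max' hS < q := (hq _ (S.max'_mem hS)).lt_of_ne fun h => hqS (h ▸ S.max'_mem hS)
  rw [sigma2_insert_of_forall_le φ x (S.max'_mem hS) S.le_max' hmax]
  exact le_add_of_nonneg_right (sq_nonneg _)

theorem sigma2_le_sigma2_insert_of_forall_ge {S : Finset ℕ} {q : ℕ} (hq : ∀ r ∈ S, q ≤ r) :
    sigma2 φ x S ≤ sigma2 φ x (insert q S) := by
  rcases S.eq_empty_or_nonempty with rfl | hS
  · simp
  have hsplit : insert q S = {q, S.min' hS} ∪ S := by
    rw [insert_union, singleton_union, insert_eq_of_mem (S.min'_mem hS)]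
  rw [hsplit, sigma2_union φ x (c := S.min' hS)
    (by simpa only [mem_insert, mem_singleton, forall_eq_or_imp, forall_eq, le_refl, and_true]
      using hq _ (S.min'_mem hS))
    (fun r hr => S.min'_le r hr) (by simp) (S.min'_mem hS)]
  exact le_add_of_nonneg_left (sigma2_nonneg φ x _)

theorem exists_forall_sigma2_le {a b : ℕ} (hab : a ≤ b) :
    ∃ t ⊆ Icc a b, a ∈ t ∧ b ∈ t ∧ ∀ s ⊆ Icc a b, sigma2 φ x s ≤ sigma2 φ x t := by
  obtain ⟨s, hs, hmax⟩ := (Icc a b).powerset.exists_max_image (sigma2 φ x)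
    ⟨∅, empty_mem_powerset _⟩
  rw [mem_powerset] at hs
  have ht : insert a (insert b s) ⊆ Icc a b := by
    simpa [insert_subset_iff, hab] using hs
  refine ⟨_, ht, mem_insert_self _ _, mem_insert_of_mem (mem_insert_self _ _),
    fun s' hs' => (hmax s' (mem_powerset.mpr hs')).trans ?_⟩
  calc sigma2 φ x s ≤ sigma2 φ x (insert b s) :=
        sigma2_le_sigma2_insert_of_forall_le φ x fun r hr => (mem_Icc.mp (hs hr)).2
    _ ≤ _ := sigma2_le_sigma2_insert_of_forall_ge φ x fun r hr =>
        (mem_Icc.mp (ht (mem_insert_of_mem hr))).1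

theorem sigma2_biUnion_Icc {m : ℕ → ℕ} (hm : Monotone m) {t : ℕ → Finset ℕ}
    (ht : ∀ i, t i ⊆ Icc (m (i - 1)) (m i)) (hlo : ∀ i, m (i - 1) ∈ t i)
    (hhi : ∀ i, m i ∈ t i) {k : ℕ} (hk : 1 ≤ k) :
    sigma2 φ x ((Icc 1 k).biUnion t) = ∑ i ∈ Icc 1 k, sigma2 φ x (t i) := by
  induction k, hk using Nat.le_induction with
  | base => simp
  | succ k hk ih =>
    have hIcc : Icc 1 (k + 1) = insert (k + 1) (Icc 1 k) := by
      ext; simp only [mem_Icc, mem_insert]; omega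
    rw [hIcc, biUnion_insert, sum_insert (by simp), union_comm, ← ih,
      add_comm (sigma2 φ x (t (k + 1)))]
    have hlo' : m k ∈ t (k + 1) := by simpa using hlo (k + 1)
    refine sigma2_union φ x (c := m k) ?_ ?_ ?_ hlo'
    · simp only [mem_biUnion, mem_Icc]
      rintro r ⟨i, hi, hr⟩
      exact (mem_Icc.mp (ht i hr)).2.trans (hm hi.2)
    · exact fun r hr => by simpa using (mem_Icc.mp (ht (k + 1) hr)).1
    · exact mem_biUnion.mpr ⟨k, mem_Icc.mpr ⟨hk, le_rfl⟩, hhi k⟩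

theorem sigma2_le_sigma2_image [Subsingleton (X 0)] {f : ℕ → ℕ} (hf : Monotone f)
    (h : ∀ p q, p < q →
      ‖phiTo φ p q (x p) - x q‖ ≤ ‖phiTo φ (f p) (f q) (x (f p)) - x (f q)‖)
    (T : Finset ℕ) : sigma2 φ x T ≤ sigma2 φ x (T.image f) := by
  induction T using Finset.induction_on_max with
  | empty => simp
  | insert q S hlt ih =>
    rcases S.eq_empty_or_nonempty with rfl | hS
    · simp
    have hp := S.max'_mem hS
    have hpq := hlt _ hp
    have hterm := pow_le_pow_left₀ (norm_nonneg _) (h _ q hpq) 2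
    rw [sigma2_insert_of_forall_le φ x hp S.le_max' hpq, image_insert]
    rcases (hf hpq.le).eq_or_lt with heq | hlt'
    · rw [heq, phiTo_self_apply, sub_self, norm_zero] at hterm
      rw [insert_eq_of_mem (heq ▸ mem_image_of_mem f hp)]
      linarith
    · have himage : ∀ r ∈ S.image f, r ≤ f (S.max' hS) := by
        simp only [mem_image, forall_exists_index, and_imp, forall_apply_eq_imp_iff₂]
        exact fun r hr => hf (S.le_max' r hr)
      rw [sigma2_insert_of_forall_le φ x (mem_image_of_mem f hp) himage hlt']
      linarith

end Variation

section Norm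

variable {X : ℕ → Type*} [∀ n, NormedAddCommGroup (X n)] [∀ n, NormedSpace ℝ (X n)]
  (φ : ∀ n, X n →L[ℝ] X (n + 1)) (x : ∀ n, X n)

theorem rho2_nonneg (S : Finset ℕ) (hS : S.Nonempty) : 0 ≤ rho2 φ x S hS :=
  add_nonneg (sigma2_nonneg φ x S) (sq_nonneg _)

theorem normJ_sq : normJ φ x ^ 2 = sSup (rhoSet φ x) ^ 2 / 2 := by
  rw [normJ, mul_pow, inv_pow, Real.sq_sqrt zero_le_two]
  ring

theorem sigma2_le_two_mul_normJ_sq (hx : memJhat φ x) (S : Finset ℕ) :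
    sigma2 φ x S ≤ 2 * normJ φ x ^ 2 := by
  rcases S.eq_empty_or_nonempty with rfl | hS
  · rw [sigma2_empty]; positivity
  have hrho : rhoJ φ x S hS ≤ sSup (rhoSet φ x) := le_csSup hx ⟨S, hS, rfl⟩
  calc sigma2 φ x S ≤ rho2 φ x S hS := le_add_of_nonneg_right (sq_nonneg _)
    _ = rhoJ φ x S hS ^ 2 := (Real.sq_sqrt (rho2_nonneg φ x S hS)).symm
    _ ≤ sSup (rhoSet φ x) ^ 2 := pow_le_pow_left₀ (Real.sqrt_nonneg _) hrho 2
    _ = 2 * normJ φ x ^ 2 := by rw [normJ_sq]; ring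

theorem memJhat_of_forall_rho2_le {C : ℝ} (h : ∀ S hS, rho2 φ x S hS ≤ C) : memJhat φ x :=
  ⟨√C, by rintro _ ⟨S, hS, rfl⟩; exact Real.sqrt_le_sqrt (h S hS)⟩

theorem normJ_sq_le_of_forall_rho2_le {C : ℝ} (h : ∀ S hS, rho2 φ x S hS ≤ 2 * C) :
    normJ φ x ^ 2 ≤ C := by
  have hC : 0 ≤ 2 * C := (rho2_nonneg φ x _ (singleton_nonempty 0)).trans (h _ _)
  have hsup : sSup (rhoSet φ x) ≤ √(2 * C) :=
    csSup_le ⟨_, {0}, singleton_nonempty 0, rfl⟩ fun _ ⟨S, hS, hr⟩ =>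
      hr ▸ Real.sqrt_le_sqrt (h S hS)
  have h0 : 0 ≤ sSup (rhoSet φ x) :=
    Real.sSup_nonneg fun _ ⟨_, _, hr⟩ => hr ▸ Real.sqrt_nonneg _
  have := pow_le_pow_left₀ h0 hsup 2
  rw [Real.sq_sqrt hC] at this
  rw [normJ_sq]
  linarith

end Norm

section Block

variable {X : ℕ → Type*} [∀ n, NormedAddCommGroup (X n)] [∀ n, NormedSpace ℝ (X n)]

/-- The shape of the vectors in the range of `(I - P_a) Q_b`. -/
structure IsBlock (φ : ∀ n, X n →L[ℝ] X (n + 1)) (a b : ℕ) (w : ∀ n, X n) : Prop where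
  eq_zero_of_le : ∀ n ≤ a, w n = 0
  phiTo_apply_eq : ∀ p q, b ≤ p → p ≤ q → phiTo φ p q (w p) = w q

variable [Subsingleton (X 0)] (φ : ∀ n, X n →L[ℝ] X (n + 1))

theorem isBlock_stepSeq_sub_restrictSeq {a b : ℕ} (hab : a < b) (y : ∀ n, X n) :
    IsBlock φ a b (stepSeq φ (fun n => min n b) y -
      restrictSeq (Set.Icc 1 a) (stepSeq φ (fun n => min n b) y)) where
  eq_zero_of_le n hn := by
    rcases n.eq_zero_or_pos with rfl | hn0
    · exact Subsingleton.elim _ _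
    · simp [restrictSeq, Nat.one_le_iff_ne_zero.mpr hn0.ne', hn]
  phiTo_apply_eq p q hp hpq := by
    have hval : ∀ n, b ≤ n → (stepSeq φ (fun n => min n b) y -
        restrictSeq (Set.Icc 1 a) (stepSeq φ (fun n => min n b) y)) n = phiTo φ b n (y b) := by
      intro n hn
      have hna : n ∉ Set.Icc 1 a := fun h => by have := h.2; omega
      simp only [Pi.sub_apply, restrictSeq, stepSeq, if_neg hna, sub_zero]
      show phiTo φ (min n b) n (y (min n b)) = _
      rw [min_eq_right hn]
    rw [hval p hp, hval q (hp.trans hpq), phiTo_phiTo_apply φ hp hpq]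

namespace IsBlock

variable {φ} {a b : ℕ} {w : ∀ n, X n}

omit [Subsingleton (X 0)] in
theorem mono (hw : IsBlock φ a b w) {a' b' : ℕ} (ha : a' ≤ a) (hb : b ≤ b') :
    IsBlock φ a' b' w :=
  ⟨fun n hn => hw.eq_zero_of_le n (hn.trans ha), fun p q hp => hw.phiTo_apply_eq p q (hb.trans hp)⟩

omit [Subsingleton (X 0)] in
theorem sum {ι : Type*} {s : Finset ι} {f : ι → ∀ n, X n} (h : ∀ i ∈ s, IsBlock φ a b (f i)) :
    IsBlock φ a b (∑ i ∈ s, f i) := by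
  refine Finset.sum_induction f (IsBlock φ a b)
    (fun v w hv hw => ⟨fun n hn => ?_, fun p q hp hpq => ?_⟩)
    ⟨fun _ _ => rfl, fun _ _ _ _ => map_zero _⟩ h
  · simp [hv.eq_zero_of_le n hn, hw.eq_zero_of_le n hn]
  · simp [hv.phiTo_apply_eq p q hp hpq, hw.phiTo_apply_eq p q hp hpq]

omit [Subsingleton (X 0)] in
theorem jump_eq_zero (hw : IsBlock φ a b w) {p q : ℕ} (hpq : p ≤ q) (h : q ≤ a ∨ b ≤ p) :
    phiTo φ p q (w p) - w q = 0 := by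
  rcases h with h | h
  · rw [hw.eq_zero_of_le q h, hw.eq_zero_of_le p (hpq.trans h), map_zero, sub_zero]
  · rw [hw.phiTo_apply_eq p q h hpq, sub_self]

theorem phiTo_min_apply (hw : IsBlock φ a b w) (q : ℕ) :
    phiTo φ (min q b) q (w (min q b)) = w q := by
  rcases le_total q b with h | h
  · rw [min_eq_left h, phiTo_self_apply]
  · rw [min_eq_right h]
    exact hw.phiTo_apply_eq b q le_rfl h

theorem norm_jump_le_norm_jump_clamp (hw : IsBlock φ a b w) (hab : a < b)
    (hφ : ∀ n, ‖φ n‖ ≤ 1) {p q : ℕ} (hpq : p < q) :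
    ‖phiTo φ p q (w p) - w q‖ ≤ ‖phiTo φ (max a (min p b)) (max a (min q b))
      (w (max a (min p b))) - w (max a (min q b))‖ := by
  by_cases h : q ≤ a ∨ b ≤ p
  · rw [hw.jump_eq_zero hpq.le h, norm_zero]
    exact norm_nonneg _
  push Not at h
  rw [min_eq_left h.2.le, max_eq_right (le_min h.1.le hab.le : a ≤ min q b)]
  have hleft : phiTo φ p q (w p) = phiTo φ (max a p) q (w (max a p)) := by
    rcases le_total a p with hap | hpa
    · rw [max_eq_right hap]
    · rw [max_eq_left hpa, hw.eq_zero_of_le p hpa, hw.eq_zero_of_le a le_rfl, map_zero, map_zero]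
  have hsplit : phiTo φ p q (w p) - w q = phiTo φ (min q b) q
      (phiTo φ (max a p) (min q b) (w (max a p)) - w (min q b)) := by
    rw [map_sub, phiTo_phiTo_apply φ (by omega) (min_le_left q b), hw.phiTo_min_apply, hleft]
  rw [hsplit]
  exact norm_phiTo_apply_le φ hφ _ q

theorem norm_sq_le_sigma2_pair (hw : IsBlock φ a b w) (hab : a < b) (hφ : ∀ n, ‖φ n‖ ≤ 1)
    (n : ℕ) : ‖w n‖ ^ 2 ≤ sigma2 φ w {a, max a (min n b)} := by
  rcases le_or_gt n a with hn | hn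
  · rw [hw.eq_zero_of_le n hn, norm_zero, sq, zero_mul]
    exact sigma2_nonneg φ w _
  rw [max_eq_right (by omega : a ≤ min n b), sigma2_pair φ w (by omega : a < min n b),
    hw.eq_zero_of_le a le_rfl, map_zero, zero_sub, norm_neg]
  calc ‖w n‖ ^ 2 = ‖phiTo φ (min n b) n (w (min n b))‖ ^ 2 := by rw [hw.phiTo_min_apply]
    _ ≤ ‖w (min n b)‖ ^ 2 := pow_le_pow_left₀ (norm_nonneg _) (norm_phiTo_apply_le φ hφ _ n) 2

theorem rho2_le (hw : IsBlock φ a b w) (hab : a < b) (hφ : ∀ n, ‖φ n‖ ≤ 1) {C : ℝ}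
    (hC : ∀ s ⊆ Icc a b, sigma2 φ w s ≤ C) (T : Finset ℕ) (hT : T.Nonempty) :
    rho2 φ w T hT ≤ 2 * C := by
  have hclamp : ∀ n, max a (min n b) ∈ Icc a b := fun n =>
    mem_Icc.mpr ⟨le_max_left _ _, max_le hab.le (min_le_right _ _)⟩
  have h1 := hC (T.image fun n => max a (min n b)) fun _ hn => by
    obtain ⟨n, -, rfl⟩ := mem_image.mp hn
    exact hclamp n
  have h2 := hC {a, max a (min (T.max' hT) b)} (insert_subset_iff.mpr
    ⟨mem_Icc.mpr ⟨le_rfl, hab.le⟩, singleton_subset_iff.mpr (hclamp _)⟩)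
  have h3 := sigma2_le_sigma2_image φ w (fun _ _ h => max_le_max le_rfl (min_le_min_right b h))
    (fun p q hpq => hw.norm_jump_le_norm_jump_clamp hab hφ hpq) T
  have h4 := hw.norm_sq_le_sigma2_pair hab hφ (T.max' hT)
  unfold rho2
  linarith

theorem memJhat (hw : IsBlock φ a b w) (hab : a < b) (hφ : ∀ n, ‖φ n‖ ≤ 1) : memJhat φ w := by
  obtain ⟨t, -, -, -, ht⟩ := exists_forall_sigma2_le φ w hab.le
  exact memJhat_of_forall_rho2_le φ w (hw.rho2_le hab hφ ht)

theorem normJ_sq_le (hw : IsBlock φ a b w) (hab : a < b) (hφ : ∀ n, ‖φ n‖ ≤ 1) {C : ℝ}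
    (hC : ∀ s ⊆ Icc a b, sigma2 φ w s ≤ C) : normJ φ w ^ 2 ≤ C :=
  normJ_sq_le_of_forall_rho2_le φ w (hw.rho2_le hab hφ hC)

end IsBlock

omit [Subsingleton (X 0)] in
theorem sigma2_sum_eq_of_isBlock {m : ℕ → ℕ} (hm : StrictMono m) {x : ℕ → ∀ n, X n}
    (hx : ∀ i, 1 ≤ i → IsBlock φ (m (i - 1)) (m i) (x i)) {k i : ℕ} (hi : i ∈ Icc 1 k)
    {t : Finset ℕ} (ht : t ⊆ Icc (m (i - 1)) (m i)) :
    sigma2 φ (∑ j ∈ Icc 1 k, x j) t = sigma2 φ (x i) t := by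
  refine sigma2_congr φ _ fun p hp q hq hpq => ?_
  have hpi := (mem_Icc.mp (ht hp)).1
  have hqi := (mem_Icc.mp (ht hq)).2
  simp only [Finset.sum_apply, map_sum, ← sum_sub_distrib]
  refine sum_eq_single_of_mem i hi fun j hj hji => (hx j (mem_Icc.mp hj).1).jump_eq_zero hpq.le ?_
  rcases hji.lt_or_gt with hlt | hgt
  · exact Or.inr ((hm.monotone (by omega : j ≤ i - 1)).trans hpi)
  · exact Or.inl (hqi.trans (hm.monotone (by omega : i ≤ j - 1)))

end Block

theorem stmt14_general {X : ℕ → Type*} [∀ n, NormedAddCommGroup (X n)] [∀ n, NormedSpace ℝ (X n)]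
    [Subsingleton (X 0)]
    (φ : ∀ n, X n →L[ℝ] X (n + 1)) (hφ : ∀ n, ‖φ n‖ ≤ 1)
    (m : ℕ → ℕ) (hmono : StrictMono m)
    (x : ℕ → ∀ n, X n)
    (hx : ∀ k, 1 ≤ k → ∃ y : ∀ n, X n, memJhat φ y ∧
      x k = stepSeq φ (fun n => min n (m k)) y -
        restrictSeq (Set.Icc 1 (m (k - 1))) (stepSeq φ (fun n => min n (m k)) y)) :
    ∀ k, 1 ≤ k →
      2 * normJ φ (∑ i ∈ Finset.Icc 1 k, x i) ^ 2 ≥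
        ∑ i ∈ Finset.Icc 1 k, normJ φ (x i) ^ 2 := by
  intro k hk
  have hstep : ∀ i, 1 ≤ i → m (i - 1) < m i := fun i hi => hmono (by omega)
  have hblock : ∀ i, 1 ≤ i → IsBlock φ (m (i - 1)) (m i) (x i) := fun i hi => by
    obtain ⟨y, -, hy⟩ := hx i hi
    exact hy ▸ isBlock_stepSeq_sub_restrictSeq φ (hstep i hi) y
  choose t ht hlo hhi hmax using fun i =>
    exists_forall_sigma2_le φ (x i) (hmono.monotone (Nat.sub_le i 1))
  have hsum : IsBlock φ (m 0) (m k) (∑ i ∈ Icc 1 k, x i) := IsBlock.sum fun i hi =>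
    (hblock i (mem_Icc.mp hi).1).mono (hmono.monotone (Nat.zero_le _))
      (hmono.monotone (mem_Icc.mp hi).2)
  calc ∑ i ∈ Icc 1 k, normJ φ (x i) ^ 2
      ≤ ∑ i ∈ Icc 1 k, sigma2 φ (x i) (t i) := sum_le_sum fun i hi =>
        (hblock i (mem_Icc.mp hi).1).normJ_sq_le (hstep i (mem_Icc.mp hi).1) hφ (hmax i)
    _ = ∑ i ∈ Icc 1 k, sigma2 φ (∑ j ∈ Icc 1 k, x j) (t i) :=
        sum_congr rfl fun i hi => (sigma2_sum_eq_of_isBlock φ hmono hblock hi (ht i)).symm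
    _ = sigma2 φ (∑ j ∈ Icc 1 k, x j) ((Icc 1 k).biUnion t) :=
        (sigma2_biUnion_Icc φ _ hmono.monotone ht hlo hhi hk).symm
    _ ≤ 2 * normJ φ (∑ i ∈ Icc 1 k, x i) ^ 2 :=
        sigma2_le_two_mul_normJ_sq φ _ (hsum.memJhat (hmono (by omega)) hφ) _

/-- if `(m_k)_{k ≥ 1}` is strictly increasing with `m_0 = 0` and
`x^k ∈ R((I - P_{m_{k-1}}) Q_{m_k})`, then `2 ‖Σ_{i≤k} x^i‖_J² ≥ Σ_{i≤k} ‖x^i‖_J²`. -/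
theorem stmt14 {X : ℕ → Type*} [∀ n, NormedAddCommGroup (X n)] [∀ n, NormedSpace ℝ (X n)]
    [∀ n, CompleteSpace (X n)] [Subsingleton (X 0)]
    (φ : ∀ n, X n →L[ℝ] X (n + 1)) (hφ : ∀ n, ‖φ n‖ ≤ 1)
    (m : ℕ → ℕ) (hm0 : m 0 = 0) (hmono : StrictMono m)
    (x : ℕ → ∀ n, X n)
    (hx : ∀ k, 1 ≤ k → ∃ y : ∀ n, X n, memJhat φ y ∧
      x k = stepSeq φ (fun n => min n (m k)) y -
        restrictSeq (Set.Icc 1 (m (k - 1))) (stepSeq φ (fun n => min n (m k)) y)) :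
    ∀ k, 1 ≤ k →
      2 * normJ φ (∑ i ∈ Finset.Icc 1 k, x i) ^ 2 ≥
        ∑ i ∈ Finset.Icc 1 k, normJ φ (x i) ^ 2 :=
  stmt14_general φ hφ m hmono x hx
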